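/- Let μ ≠ 0, a > 0, T > 0 and let v : (0,∞) → ℝ be twice differentiable. Suppose r₀ > 0, s₀ > 0 satisfy T = r₀·v'(r₀) and μ² = s₀²·r₀³·v'(r₀), and suppose further that v'(r₀) > 0 and r₀·v''(r₀) + v'(r₀) > 0. Then the Hessian matrix (the 4×4 matrix of second partial derivatives in the variables (r, p_r, s, S)) of the reduced Nosé-thermostated Hamiltonian 𝐇_μ at the point (r₀, 0, s₀, 0) is positive definite. -/

import Mathlib

/-- The reduced Nosé-thermostated Hamiltonian
`𝐇_μ(r, p_r, s, S) = (p_r² + μ²/r²)/(2s²) + v(r) + (a/2)·S² + T·log s`. -/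
noncomputable def Hred (μ a T : ℝ) (v : ℝ → ℝ) (r pr s S : ℝ) : ℝ :=
  (pr ^ 2 + μ ^ 2 / r ^ 2) / (2 * s ^ 2) + v r + a / 2 * S ^ 2 + T * Real.log s

/-- Partial derivative of a function of four real variables in the `i`-th
coordinate direction. -/
noncomputable def pder (i : Fin 4) (F : (Fin 4 → ℝ) → ℝ) : (Fin 4 → ℝ) → ℝ :=
  fun x => deriv (fun t : ℝ => F (Function.update x i t)) (x i)

/-! At a point with `p_r = S = 0` only the variables `r` and `s` are coupled, so up to reordering
the Hessian is block diagonal: the entries `1 / s₀²` for `p_r` and `a` for `S`, and a `2 × 2` block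
in `(r, s)`. The equilibrium relations turn that block into
`[[3 v' / r₀ + v'', 2 v' / s₀], [2 v' / s₀, 2 r₀ v' / s₀²]]`, whose top-left entry is
`(2 v' + (r₀ v'' + v')) / r₀ > 0` and whose determinant is `2 v' (r₀ v'' + v') / s₀² > 0`. -/

open Function Filter Topology

lemma pder_eq_of_hasDerivAt {i : Fin 4} {F : (Fin 4 → ℝ) → ℝ} {x : Fin 4 → ℝ} {d : ℝ}
    (h : HasDerivAt (fun t => F (update x i t)) d (x i)) : pder i F x = d :=
  h.deriv

lemma pder_congr_of_eventuallyEq {i : Fin 4} {F G : (Fin 4 → ℝ) → ℝ} {x : Fin 4 → ℝ}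
    (h : F =ᶠ[𝓝 x] G) : pder i F x = pder i G x := by
  have hline : Tendsto (update x i) (𝓝 (x i)) (𝓝 x) := by
    simpa using ((continuous_const (y := x)).update i continuous_id).tendsto (x i)
  exact Filter.EventuallyEq.deriv_eq (hline.eventually h)

lemma posDef_of_sq_lt_mul {A B c D e : ℝ} (hA : 0 < A) (hc : 0 < c) (he : 0 < e)
    (hB : B ^ 2 < A * D) :
    (!![A, 0, B, 0; 0, c, 0, 0; B, 0, D, 0; 0, 0, 0, e] : Matrix (Fin 4) (Fin 4) ℝ).PosDef := by
  refine Matrix.PosDef.of_dotProduct_mulVec_pos ?_ fun x hx => ?_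
  · ext i j
    fin_cases i <;> fin_cases j <;> simp
  have hQ : star x ⬝ᵥ (!![A, 0, B, 0; 0, c, 0, 0; B, 0, D, 0; 0, 0, 0, e]).mulVec x
      = A * x 0 ^ 2 + 2 * B * x 0 * x 2 + D * x 2 ^ 2 + c * x 1 ^ 2 + e * x 3 ^ 2 := by
    simp only [dotProduct, Pi.star_apply, star_trivial, Matrix.mulVec, Matrix.of_apply,
      Matrix.cons_val', Matrix.cons_val_fin_one, Fin.sum_univ_four, Matrix.cons_val_zero,
      Matrix.cons_val_one, Matrix.cons_val, zero_mul, add_zero, zero_add]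
    ring
  rw [hQ]
  refine pos_of_mul_pos_right (?_ : 0 < A * _) hA.le
  have hsum : A * (A * x 0 ^ 2 + 2 * B * x 0 * x 2 + D * x 2 ^ 2 + c * x 1 ^ 2 + e * x 3 ^ 2)
      = (A * x 0 + B * x 2) ^ 2 + (A * D - B ^ 2) * x 2 ^ 2 + A * c * x 1 ^ 2 + A * e * x 3 ^ 2 := by
    ring
  rw [hsum]
  by_contra! hle
  have hdisc : 0 < A * D - B ^ 2 := sub_pos.2 hB
  have h0 := sq_nonneg (A * x 0 + B * x 2)
  have h1 : 0 ≤ A * c * x 1 ^ 2 := by positivity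
  have h2 : 0 ≤ (A * D - B ^ 2) * x 2 ^ 2 := by positivity
  have h3 : 0 ≤ A * e * x 3 ^ 2 := by positivity
  have hx1 : x 1 = 0 := by simpa [hA.ne', hc.ne'] using (by linarith : A * c * x 1 ^ 2 = 0)
  have hx2 : x 2 = 0 := by simpa [hdisc.ne'] using (by linarith : (A * D - B ^ 2) * x 2 ^ 2 = 0)
  have hx3 : x 3 = 0 := by simpa [hA.ne', he.ne'] using (by linarith : A * e * x 3 ^ 2 = 0)
  have hx0 : x 0 = 0 := by
    simpa [hx2, hA.ne'] using (by linarith : (A * x 0 + B * x 2) ^ 2 = 0)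
  exact hx (funext fun i => by fin_cases i <;> assumption)

noncomputable def gradHred (μ a T : ℝ) (v : ℝ → ℝ) (r p s S : ℝ) : Fin 4 → ℝ :=
  ![-μ ^ 2 / (r ^ 3 * s ^ 2) + deriv v r, p / s ^ 2, -(p ^ 2 + μ ^ 2 / r ^ 2) / s ^ 3 + T / s, a * S]

noncomputable def hessHred (μ a T : ℝ) (v : ℝ → ℝ) (r p s : ℝ) : Matrix (Fin 4) (Fin 4) ℝ :=
  !![3 * μ ^ 2 / (r ^ 4 * s ^ 2) + deriv (deriv v) r, 0, 2 * μ ^ 2 / (r ^ 3 * s ^ 3), 0;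
     0, 1 / s ^ 2, -2 * p / s ^ 3, 0;
     2 * μ ^ 2 / (r ^ 3 * s ^ 3), -2 * p / s ^ 3, 3 * (p ^ 2 + μ ^ 2 / r ^ 2) / s ^ 4 - T / s ^ 2, 0;
     0, 0, 0, a]

section Hamiltonian

variable (μ a T : ℝ) (v : ℝ → ℝ)

section Coordinates

variable (r p s S : ℝ)

lemma hasDerivAt_Hred_r (hr : r ≠ 0) (hv : DifferentiableAt ℝ v r) :
    HasDerivAt (fun r => Hred μ a T v r p s S) (-μ ^ 2 / (r ^ 3 * s ^ 2) + deriv v r) r := by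
  have h := ((((hasDerivAt_const r (μ ^ 2)).div (hasDerivAt_pow 2 r) (by positivity)).const_add
    (p ^ 2)).div_const (2 * s ^ 2)).add hv.hasDerivAt
  refine ((h.add_const (a / 2 * S ^ 2)).add_const (T * Real.log s)).congr_deriv ?_
  field_simp; ring

lemma hasDerivAt_Hred_pr :
    HasDerivAt (fun p => Hred μ a T v r p s S) (p / s ^ 2) p := by
  have h := ((hasDerivAt_pow 2 p).add_const (μ ^ 2 / r ^ 2)).div_const (2 * s ^ 2)
  refine (((h.add_const (v r)).add_const (a / 2 * S ^ 2)).add_const (T * Real.log s)).congr_deriv ?_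
  field_simp; ring

lemma hasDerivAt_Hred_s (hs : s ≠ 0) :
    HasDerivAt (fun s => Hred μ a T v r p s S)
      (-(p ^ 2 + μ ^ 2 / r ^ 2) / s ^ 3 + T / s) s := by
  have h := (hasDerivAt_const s (p ^ 2 + μ ^ 2 / r ^ 2)).div
    ((hasDerivAt_pow 2 s).const_mul 2) (by positivity)
  refine (((h.add_const (v r)).add_const (a / 2 * S ^ 2)).add
    ((Real.hasDerivAt_log hs).const_mul T)).congr_deriv ?_
  field_simp; ring

lemma hasDerivAt_Hred_S :
    HasDerivAt (fun S => Hred μ a T v r p s S) (a * S) S := by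
  have h := ((hasDerivAt_pow 2 S).const_mul (a / 2)).const_add
    ((p ^ 2 + μ ^ 2 / r ^ 2) / (2 * s ^ 2) + v r)
  refine (h.add_const (T * Real.log s)).congr_deriv ?_
  ring

lemma hasDerivAt_gradHred_r (hr : r ≠ 0) (hs : s ≠ 0) (hv : DifferentiableAt ℝ (deriv v) r) :
    HasDerivAt (fun r => gradHred μ a T v r p s S) (hessHred μ a T v r p s 0) r := by
  rw [hasDerivAt_pi]
  intro j
  fin_cases j <;> simp only [gradHred, hessHred, Matrix.of_apply, Matrix.cons_val, Fin.zero_eta,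
    Fin.mk_one, Fin.reduceFinMk, hasDerivAt_const]
  · refine (((hasDerivAt_const r (-μ ^ 2)).div ((hasDerivAt_pow 3 r).mul_const (s ^ 2))
      (by positivity)).add hv.hasDerivAt).congr_deriv ?_
    field_simp; ring
  · refine (((((hasDerivAt_const r (μ ^ 2)).div (hasDerivAt_pow 2 r) (by positivity)).const_add
      (p ^ 2)).neg.div_const (s ^ 3)).add_const (T / s)).congr_deriv ?_
    field_simp; ring

lemma hasDerivAt_gradHred_pr :
    HasDerivAt (fun p => gradHred μ a T v r p s S) (hessHred μ a T v r p s 1) p := by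
  rw [hasDerivAt_pi]
  intro j
  fin_cases j <;> simp only [gradHred, hessHred, Matrix.of_apply, Matrix.cons_val, Fin.zero_eta,
    Fin.mk_one, Fin.reduceFinMk, hasDerivAt_const]
  · exact (hasDerivAt_id p).div_const (s ^ 2)
  · refine ((((hasDerivAt_pow 2 p).add_const (μ ^ 2 / r ^ 2)).neg.div_const (s ^ 3)).add_const
      (T / s)).congr_deriv ?_
    ring

lemma hasDerivAt_gradHred_s (hr : r ≠ 0) (hs : s ≠ 0) :
    HasDerivAt (fun s => gradHred μ a T v r p s S) (hessHred μ a T v r p s 2) s := by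
  rw [hasDerivAt_pi]
  intro j
  fin_cases j <;> simp only [gradHred, hessHred, Matrix.of_apply, Matrix.cons_val, Fin.zero_eta,
    Fin.mk_one, Fin.reduceFinMk, hasDerivAt_const]
  · refine (((hasDerivAt_const s (-μ ^ 2)).div ((hasDerivAt_pow 2 s).const_mul (r ^ 3))
      (by positivity)).add_const (deriv v r)).congr_deriv ?_
    field_simp; ring
  · refine ((hasDerivAt_const s p).div (hasDerivAt_pow 2 s) (by positivity)).congr_deriv ?_
    field_simp; ring
  · refine (((hasDerivAt_const s (-(p ^ 2 + μ ^ 2 / r ^ 2))).div (hasDerivAt_pow 3 s)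
      (by positivity)).add ((hasDerivAt_const s T).div (hasDerivAt_id' s) hs)).congr_deriv ?_
    field_simp; ring

lemma hasDerivAt_gradHred_S :
    HasDerivAt (fun S => gradHred μ a T v r p s S) (hessHred μ a T v r p s 3) S := by
  rw [hasDerivAt_pi]
  intro j
  fin_cases j <;> simp only [gradHred, hessHred, Matrix.of_apply, Matrix.cons_val, Fin.zero_eta,
    Fin.mk_one, Fin.reduceFinMk, hasDerivAt_const]
  simpa using (hasDerivAt_id S).const_mul a

end Coordinates

lemma pder_Hred {y : Fin 4 → ℝ} (hy0 : y 0 ≠ 0) (hy2 : y 2 ≠ 0) (hv : DifferentiableAt ℝ v (y 0))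
    (j : Fin 4) :
    pder j (fun x => Hred μ a T v (x 0) (x 1) (x 2) (x 3)) y
      = gradHred μ a T v (y 0) (y 1) (y 2) (y 3) j := by
  apply pder_eq_of_hasDerivAt
  fin_cases j <;> simp only [gradHred, Matrix.cons_val, Fin.zero_eta, Fin.mk_one, Fin.reduceFinMk,
    update_self, ne_eq, Fin.reduceEq, not_false_eq_true, update_of_ne]
  · exact hasDerivAt_Hred_r μ a T v _ _ _ _ hy0 hv
  · exact hasDerivAt_Hred_pr μ a T v _ _ _ _
  · exact hasDerivAt_Hred_s μ a T v _ _ _ _ hy2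
  · exact hasDerivAt_Hred_S μ a T v _ _ _ _

theorem hessian_Hred {y : Fin 4 → ℝ} (hy0 : y 0 ≠ 0) (hy2 : y 2 ≠ 0)
    (hv : ∀ᶠ r in 𝓝 (y 0), DifferentiableAt ℝ v r) (hv' : DifferentiableAt ℝ (deriv v) (y 0)) :
    Matrix.of (fun i j => pder i (pder j (fun x => Hred μ a T v (x 0) (x 1) (x 2) (x 3))) y)
      = hessHred μ a T v (y 0) (y 1) (y 2) := by
  have hgrad (j : Fin 4) : pder j (fun x => Hred μ a T v (x 0) (x 1) (x 2) (x 3))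
      =ᶠ[𝓝 y] fun z => gradHred μ a T v (z 0) (z 1) (z 2) (z 3) j := by
    have hz0 : ∀ᶠ z in 𝓝 y, z 0 ≠ 0 := (continuous_apply 0).continuousAt.eventually_ne hy0
    have hz2 : ∀ᶠ z in 𝓝 y, z 2 ≠ 0 := (continuous_apply 2).continuousAt.eventually_ne hy2
    have hzv : ∀ᶠ z in 𝓝 y, DifferentiableAt ℝ v (z 0) := (continuous_apply 0).continuousAt hv
    filter_upwards [hz0, hz2, hzv] with z hz0 hz2 hzv using pder_Hred μ a T v hz0 hz2 hzv j
  ext i j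
  rw [Matrix.of_apply, pder_congr_of_eventuallyEq (hgrad j)]
  apply pder_eq_of_hasDerivAt
  fin_cases i <;> simp only [Fin.zero_eta, Fin.mk_one, Fin.reduceFinMk, update_self, ne_eq,
    Fin.reduceEq, not_false_eq_true, update_of_ne]
  · exact hasDerivAt_pi.1 (hasDerivAt_gradHred_r μ a T v _ (y 1) (y 2) (y 3) hy0 hy2 hv') j
  · exact hasDerivAt_pi.1 (hasDerivAt_gradHred_pr μ a T v (y 0) _ (y 2) (y 3)) j
  · exact hasDerivAt_pi.1 (hasDerivAt_gradHred_s μ a T v (y 0) (y 1) _ (y 3) hy0 hy2) j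
  · exact hasDerivAt_pi.1 (hasDerivAt_gradHred_S μ a T v (y 0) (y 1) (y 2) _) j

end Hamiltonian

lemma hessHred_eq_of_equilibrium {μ a T : ℝ} {v : ℝ → ℝ} {r s : ℝ} (hr : r ≠ 0) (hs : s ≠ 0)
    (e1 : T = r * deriv v r) (e2 : μ ^ 2 = s ^ 2 * r ^ 3 * deriv v r) :
    hessHred μ a T v r 0 s
      = !![3 * deriv v r / r + deriv (deriv v) r, 0, 2 * deriv v r / s, 0;
           0, 1 / s ^ 2, 0, 0;
           2 * deriv v r / s, 0, 2 * r * deriv v r / s ^ 2, 0;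
           0, 0, 0, a] := by
  subst e1
  ext i j
  fin_cases i <;> fin_cases j <;> simp [hessHred, e2, field]
  norm_num

theorem hessian_posDef_general (μ a T : ℝ) (ha : 0 < a)
    (v : ℝ → ℝ)
    (hv : ∀ r > (0:ℝ), DifferentiableAt ℝ v r ∧ DifferentiableAt ℝ (deriv v) r)
    (r₀ s₀ : ℝ) (hr₀ : 0 < r₀) (hs₀ : 0 < s₀)
    (e1 : T = r₀ * deriv v r₀) (e2 : μ ^ 2 = s₀ ^ 2 * r₀ ^ 3 * deriv v r₀)
    (h1 : 0 < deriv v r₀) (h2 : 0 < r₀ * deriv (deriv v) r₀ + deriv v r₀) :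
    (Matrix.of fun i j : Fin 4 =>
      pder i (pder j (fun x => Hred μ a T v (x 0) (x 1) (x 2) (x 3)))
        ![r₀, 0, s₀, 0]).PosDef := by
  have hv_near : ∀ᶠ r in 𝓝 r₀, DifferentiableAt ℝ v r :=
    (eventually_gt_nhds hr₀).mono fun r hr => (hv r hr).1
  rw [hessian_Hred μ a T v hr₀.ne' hs₀.ne' hv_near (hv r₀ hr₀).2]
  change (hessHred μ a T v r₀ 0 s₀).PosDef
  rw [hessHred_eq_of_equilibrium hr₀.ne' hs₀.ne' e1 e2]
  set v₁ := deriv v r₀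
  set v₂ := deriv (deriv v) r₀
  have hA : 0 < 3 * v₁ / r₀ + v₂ := by
    have h : 3 * v₁ / r₀ + v₂ = (2 * v₁ + (r₀ * v₂ + v₁)) / r₀ := by field_simp; ring
    rw [h]
    positivity
  have hdet : (2 * v₁ / s₀) ^ 2 < (3 * v₁ / r₀ + v₂) * (2 * r₀ * v₁ / s₀ ^ 2) := by
    have h : (3 * v₁ / r₀ + v₂) * (2 * r₀ * v₁ / s₀ ^ 2) - (2 * v₁ / s₀) ^ 2
        = 2 * v₁ * (r₀ * v₂ + v₁) / s₀ ^ 2 := by field_simp; ring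
    have : 0 < 2 * v₁ * (r₀ * v₂ + v₁) / s₀ ^ 2 := by positivity
    linarith
  exact posDef_of_sq_lt_mul hA (by positivity) ha hdet

/-- At a relative equilibrium `(r₀, 0, s₀, 0)` (i.e. `T = r₀ v'(r₀)`,
`μ² = s₀² r₀³ v'(r₀)`) with `v'(r₀) > 0` and `r₀ v''(r₀) + v'(r₀) > 0`
(hypotheses H1, H2), the Hessian of the reduced Nosé-thermostated Hamiltonian
`𝐇_μ` in the variables `(r, p_r, s, S)` is positive definite. -/
theorem hessian_posDef (μ a T : ℝ) (hμ : μ ≠ 0) (ha : 0 < a) (hT : 0 < T)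
    (v : ℝ → ℝ)
    (hv : ∀ r > (0:ℝ), DifferentiableAt ℝ v r ∧ DifferentiableAt ℝ (deriv v) r)
    (r₀ s₀ : ℝ) (hr₀ : 0 < r₀) (hs₀ : 0 < s₀)
    (e1 : T = r₀ * deriv v r₀) (e2 : μ ^ 2 = s₀ ^ 2 * r₀ ^ 3 * deriv v r₀)
    (h1 : 0 < deriv v r₀) (h2 : 0 < r₀ * deriv (deriv v) r₀ + deriv v r₀) :
    (Matrix.of fun i j : Fin 4 =>
      pder i (pder j (fun x => Hred μ a T v (x 0) (x 1) (x 2) (x 3)))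
        ![r₀, 0, s₀, 0]).PosDef :=
  hessian_posDef_general μ a T ha v hv r₀ s₀ hr₀ hs₀ e1 e2 h1 h2
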